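/- arXiv:1212.4440 — 4 statements merged into one kernel-verified Lean document; each statement's English description precedes it below -/
import Mathlib

section
/- For all real numbers x, y with 1/2 ≤ x < y < 1, we have (log y − log x) / (log(1−x) − log(1−y)) ≤ (4 − 2y)/3. -/
/-!
Writing `log b - log a = log (b / a)` with `b / a ≥ 1`, the numerator is bounded above by
`u ≤ sinh u` and the denominator below by `log (1 + t) ≥ 2t / (t + 2)`. Both bounds carry the
factor `y - x`; after cancelling it the claim becomes a polynomial inequality on
`1/2 ≤ x ≤ y ≤ 1`, tight at `x = y = 1/2`.
-/

open Real

namespace Real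

variable {a b : ℝ}

lemma log_sub_log_le_of_le (ha : 0 < a) (hab : a ≤ b) :
    log b - log a ≤ (b - a) * (a + b) / (2 * a * b) := by
  have hb : 0 < b := ha.trans_le hab
  have h := self_le_sinh_iff.2 (log_nonneg ((one_le_div ha).2 hab))
  rw [sinh_log (div_pos hb ha), log_div hb.ne' ha.ne', inv_div] at h
  convert h using 1
  field_simp
  ring

lemma two_mul_sub_div_add_le_log_sub_log (ha : 0 < a) (hab : a ≤ b) :
    2 * (b - a) / (a + b) ≤ log b - log a := by
  have h := le_log_one_add_of_nonneg (div_nonneg (sub_nonneg.2 hab) ha.le)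
  rw [one_add_div ha.ne', add_sub_cancel, log_div (ha.trans_le hab).ne' ha.ne'] at h
  convert h using 1
  field_simp
  ring

end Real

lemma three_mul_add_mul_two_sub_add_le {x y : ℝ} (hx : 1/2 ≤ x) (hxy : x ≤ y) (hy : y ≤ 1) :
    3 * (x + y) * (2 - x - y) ≤ 8 * x * y * (2 - y) := by
  nlinarith [mul_nonneg (sub_nonneg.2 hx) (sub_nonneg.2 hxy),
    mul_nonneg (sub_nonneg.2 hx) (sub_nonneg.2 hy), mul_nonneg (sub_nonneg.2 hxy) (sub_nonneg.2 hy)]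

theorem stmt_0 (x y : ℝ) (hx : 1/2 ≤ x) (hxy : x < y) (hy : y < 1) :
    (Real.log y - Real.log x) / (Real.log (1 - x) - Real.log (1 - y)) ≤ (4 - 2*y) / 3 := by
  have hx0 : 0 < x := by linarith
  have hy0 : 0 < y := hx0.trans hxy
  have hnum := log_sub_log_le_of_le hx0 hxy.le
  have hden := two_mul_sub_div_add_le_log_sub_log (sub_pos.2 hy) (sub_le_sub_left hxy.le 1)
  have hsum : 0 < (1 - y) + (1 - x) := by linarith
  have hden_pos : 0 < log (1 - x) - log (1 - y) :=
    lt_of_lt_of_le (div_pos (by linarith) hsum) hden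
  rw [div_le_div_iff₀ hden_pos three_pos]
  calc (log y - log x) * 3 ≤ (y - x) * (x + y) / (2 * x * y) * 3 := by gcongr
    _ ≤ (4 - 2 * y) * (2 * ((1 - x) - (1 - y)) / ((1 - y) + (1 - x))) := by
      rw [div_mul_eq_mul_div, mul_div_assoc', div_le_div_iff₀ (by positivity) hsum]
      nlinarith [mul_le_mul_of_nonneg_left (three_mul_add_mul_two_sub_add_le hx hxy.le hy.le)
        (sub_nonneg.2 hxy.le)]
    _ ≤ (4 - 2 * y) * (log (1 - x) - log (1 - y)) := by gcongr; linarith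
end

section
/- Let 0 < c < 1/2, a = 1/(2(1−c)), b = 1/(2c), and f₀ the piecewise linear map with f₀(x) = a·x on [0, 1−c]. With the metric d(x,y) = |h(x) − h(y)| (h(x) = log(2x) for x ≤ 1/2, h(x) = −log(2(1−x)) for x > 1/2): if x, y ∈ [1/2, 1−c], then d(f₀(x), f₀(y)) ≤ (1 − (2c/3)·d(x,y)) · d(x,y). -/
/-!
For `x ≤ y` put `p = 1 - y` and `q = 1 - x`, so that `c ≤ p ≤ q ≤ 1/2`. Both distances are
logarithmic: `d x y = T := log (q / p)`, and since `f₀` is a dilation into `[1/4, 1/2]`, where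
`h = log (2 ·)`, `d (f₀ x) (f₀ y) = log ((1 - p) / (1 - q)) ≤ (q - p) / (1 - q)`. The
logarithmic mean of `p` and `q` lies between their geometric and arithmetic means, which gives
`T ≥ 2 (q - p) / (q + p)` and `c T² ≤ p T² ≤ (q - p)² / q`; what remains is a polynomial
inequality in `p ≤ q ≤ 1/2`.
-/

noncomputable def h (x : ℝ) : ℝ :=
  if x ≤ 1/2 then Real.log (2*x) else -Real.log (2*(1-x))

noncomputable def d (x y : ℝ) : ℝ := |h x - h y|

noncomputable def f₀ (c x : ℝ) : ℝ :=
  if x ≤ 1 - c then x / (2*(1-c)) else 1 - (1-x) / (2*c)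

noncomputable def f₁ (c x : ℝ) : ℝ :=
  if x ≤ c then x / (2*c) else 1 - (1-x) / (2*(1-c))

open Real Set

namespace Real

lemma sinh_le_mul_cosh {s : ℝ} (hs : 0 ≤ s) : sinh s ≤ s * cosh s := by
  have hmvt := (convex_Icc 0 s).image_sub_le_mul_sub_of_deriv_le continuous_sinh.continuousOn
    differentiable_sinh.differentiableOn (C := cosh s) (fun t ht => ?_) 0 ⟨le_rfl, hs⟩ s
    ⟨hs, le_rfl⟩ hs
  · simpa [mul_comm] using hmvt
  · rw [interior_Icc] at ht
    rw [deriv_sinh, cosh_le_cosh, abs_of_pos ht.1, abs_of_nonneg hs]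
    exact ht.2.le

lemma exp_sub_exp_eq_mul_sinh (a b : ℝ) :
    exp b - exp a = 2 * exp ((a + b) / 2) * sinh ((b - a) / 2) := by
  rw [sinh_eq]
  field_simp
  rw [mul_sub, ← exp_add, ← exp_add]
  ring_nf

lemma exp_add_exp_eq_mul_cosh (a b : ℝ) :
    exp b + exp a = 2 * exp ((a + b) / 2) * cosh ((b - a) / 2) := by
  rw [cosh_eq]
  field_simp
  rw [mul_add, ← exp_add, ← exp_add]
  ring_nf

end Real

section LogMean

variable {a b p q : ℝ}

-- Hermite–Hadamard for `exp` on `[a, b]`: midpoint value ≤ mean value ≤ trapezoid value.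
lemma sub_mul_exp_midpoint_le_exp_sub_exp (hab : a ≤ b) :
    (b - a) * exp ((a + b) / 2) ≤ exp b - exp a := by
  have hs : 0 ≤ (b - a) / 2 := by linarith
  have hsinh := self_le_sinh_iff.2 hs
  rw [exp_sub_exp_eq_mul_sinh]
  nlinarith [exp_pos ((a + b) / 2)]

lemma two_mul_exp_sub_exp_le (hab : a ≤ b) :
    2 * (exp b - exp a) ≤ (b - a) * (exp b + exp a) := by
  have hs : 0 ≤ (b - a) / 2 := by linarith
  have hsinh := sinh_le_mul_cosh hs
  rw [exp_sub_exp_eq_mul_sinh, exp_add_exp_eq_mul_cosh]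
  nlinarith [exp_pos ((a + b) / 2)]

lemma sq_log_sub_log_mul_le (hp : 0 < p) (hpq : p ≤ q) :
    (log q - log p) ^ 2 * (p * q) ≤ (q - p) ^ 2 := by
  have hq : 0 < q := hp.trans_le hpq
  have hlog : log p ≤ log q := log_le_log hp hpq
  have hmid := sub_mul_exp_midpoint_le_exp_sub_exp hlog
  rw [exp_log hp, exp_log hq] at hmid
  have hsq : exp ((log p + log q) / 2) ^ 2 = p * q := by
    rw [sq, ← exp_add, add_halves, exp_add, exp_log hp, exp_log hq]
  calc (log q - log p) ^ 2 * (p * q) = ((log q - log p) * exp ((log p + log q) / 2)) ^ 2 := by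
        rw [mul_pow, hsq]
    _ ≤ (q - p) ^ 2 := pow_le_pow_left₀ (mul_nonneg (sub_nonneg.2 hlog) (exp_pos _).le) hmid 2

lemma two_mul_sub_le_log_sub_log_mul_add (hp : 0 < p) (hpq : p ≤ q) :
    2 * (q - p) ≤ (log q - log p) * (q + p) := by
  have hmid := two_mul_exp_sub_exp_le (log_le_log hp hpq)
  rwa [exp_log hp, exp_log (hp.trans_le hpq)] at hmid

end LogMean

section KeyInequality

variable {c p q : ℝ}

lemma one_div_one_sub_add_le_two_div_add (hp : 0 < p) (hpq : p ≤ q) (hq : q ≤ 1 / 2) :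
    1 / (1 - q) + 2 / 3 * ((q - p) / q) ≤ 2 / (q + p) := by
  have hq0 : 0 < q := hp.trans_le hpq
  have h1q : 0 < 1 - q := by linarith
  have hnum : 0 ≤ 6 * q * (1 - q) - 3 * q * (q + p) - 2 * (q - p) * (q + p) * (1 - q) := by
    nlinarith [mul_nonneg (sub_nonneg.2 hpq) (sub_nonneg.2 hq), mul_nonneg hp.le (sub_nonneg.2 hq)]
  have hdiff : 2 / (q + p) - (1 / (1 - q) + 2 / 3 * ((q - p) / q)) =
      (6 * q * (1 - q) - 3 * q * (q + p) - 2 * (q - p) * (q + p) * (1 - q)) /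
        (3 * q * (q + p) * (1 - q)) := by
    field_simp
    ring
  rw [← sub_nonneg, hdiff]
  exact div_nonneg hnum (by positivity)

lemma log_one_sub_sub_log_one_sub_le (hc : 0 < c) (hcp : c ≤ p) (hpq : p ≤ q)
    (hq : q ≤ 1 / 2) :
    log (1 - p) - log (1 - q) ≤
      (1 - (2 * c / 3) * (log q - log p)) * (log q - log p) := by
  have hp : 0 < p := hc.trans_le hcp
  have hq0 : 0 < q := hp.trans_le hpq
  have h1p : 0 < 1 - p := by linarith
  have h1q : 0 < 1 - q := by linarith
  set T := log q - log p
  have hlog_one_sub : log (1 - p) - log (1 - q) ≤ (q - p) / (1 - q) := by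
    have := log_le_sub_one_of_pos (div_pos h1p h1q)
    rwa [log_div h1p.ne' h1q.ne', div_sub_one h1q.ne', sub_sub_sub_cancel_left] at this
  have hpoly := mul_le_mul_of_nonneg_left (one_div_one_sub_add_le_two_div_add hp hpq hq)
    (sub_nonneg.2 hpq)
  have hlog_lower : (q - p) * (2 / (q + p)) ≤ T := by
    rw [mul_div_assoc', mul_comm, div_le_iff₀ (by linarith)]
    exact two_mul_sub_le_log_sub_log_mul_add hp hpq
  have hlog_upper : c * T ^ 2 ≤ (q - p) ^ 2 / q := by
    rw [le_div_iff₀ hq0]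
    nlinarith [sq_log_sub_log_mul_le hp hpq, sq_nonneg T]
  calc log (1 - p) - log (1 - q) ≤ (q - p) / (1 - q) := hlog_one_sub
    _ ≤ (q - p) * (2 / (q + p)) - 2 / 3 * ((q - p) ^ 2 / q) := by
      rw [mul_add, mul_one_div] at hpoly
      have : (q - p) * (2 / 3 * ((q - p) / q)) = 2 / 3 * ((q - p) ^ 2 / q) := by ring
      linarith
    _ ≤ T - 2 * c / 3 * T ^ 2 := by linarith
    _ = (1 - (2 * c / 3) * T) * T := by ring

end KeyInequality

section Metric

lemma d_comm (x y : ℝ) : d x y = d y x := abs_sub_comm _ _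

variable {c x y : ℝ}

lemma h_of_half_le (hx : 1 / 2 ≤ x) (hx1 : x < 1) : h x = -log 2 - log (1 - x) := by
  have hsplit : -log (2 * (1 - x)) = -log 2 - log (1 - x) := by
    rw [log_mul two_ne_zero (by linarith)]
    ring
  rcases hx.eq_or_lt with rfl | hlt
  · rw [h, if_pos le_rfl, ← hsplit]
    norm_num
  · rw [h, if_neg (not_le.2 hlt), hsplit]

lemma d_of_half_le (hx : x ∈ Ico (1 / 2) 1) (hy : y ∈ Ico (1 / 2) 1) :
    d x y = |log (1 - x) - log (1 - y)| := by
  rw [d, h_of_half_le hx.1 hx.2, h_of_half_le hy.1 hy.2, abs_sub_comm]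
  ring_nf

lemma h_f₀ (hx : x ∈ Icc (1 / 2) (1 - c)) : h (f₀ c x) = log x - log (1 - c) := by
  have hx0 : 0 < x := by linarith [hx.1]
  have h1c : 0 < 1 - c := by linarith [hx.1, hx.2]
  have hf : f₀ c x = x / (2 * (1 - c)) := if_pos hx.2
  have hhalf : x / (2 * (1 - c)) ≤ 1 / 2 := by
    rw [div_le_iff₀ (by positivity)]
    linarith [hx.2]
  rw [hf, h, if_pos hhalf, ← mul_div_assoc, mul_div_mul_left _ _ two_ne_zero,
    log_div hx0.ne' h1c.ne']

lemma d_f₀ (hx : x ∈ Icc (1 / 2) (1 - c)) (hy : y ∈ Icc (1 / 2) (1 - c)) :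
    d (f₀ c x) (f₀ c y) = |log x - log y| := by
  rw [d, h_f₀ hx, h_f₀ hy]
  ring_nf

end Metric

theorem stmt_9_general (c : ℝ) (hc0 : 0 < c)
    (x y : ℝ) (hx : x ∈ Set.Icc (1/2) (1-c)) (hy : y ∈ Set.Icc (1/2) (1-c)) :
    d (f₀ c x) (f₀ c y) ≤ (1 - (2*c/3) * d x y) * d x y := by
  wlog hxy : x ≤ y generalizing x y
  · rw [d_comm, d_comm x]
    exact this y x hy hx (le_of_not_ge hxy)
  have hx' : x ∈ Ico (1 / 2) 1 := ⟨hx.1, by linarith [hx.2]⟩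
  have hy' : y ∈ Ico (1 / 2) 1 := ⟨hy.1, by linarith [hy.2]⟩
  have hlog : log x ≤ log y := log_le_log (by linarith [hx.1]) hxy
  have hlog_one_sub : log (1 - y) ≤ log (1 - x) := log_le_log (by linarith [hy'.2]) (by linarith)
  rw [d_f₀ hx hy, d_of_half_le hx' hy', abs_of_nonpos (by linarith), abs_of_nonneg (by linarith)]
  simpa using log_one_sub_sub_log_one_sub_le hc0 (p := 1 - y) (q := 1 - x)
    (by linarith [hy.2]) (by linarith) (by linarith [hx.1])

theorem stmt_9 (c : ℝ) (hc0 : 0 < c) (hc1 : c < 1/2)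
    (x y : ℝ) (hx : x ∈ Set.Icc (1/2) (1-c)) (hy : y ∈ Set.Icc (1/2) (1-c)) :
    d (f₀ c x) (f₀ c y) ≤ (1 - (2*c/3) * d x y) * d x y :=
  stmt_9_general c hc0 x y hx hy
end

section
/- Let 0 < c < 1/2, a = 1/(2(1−c)), b = 1/(2c), and f₀ the piecewise linear map with f₀(x) = a·x on [0, 1−c] and f₀(x) = 1 − b(1−x) on [1−c, 1]. With the metric d(x,y) = |h(x) − h(y)| (h(x) = log(2x) for x ≤ 1/2, h(x) = −log(2(1−x)) for x > 1/2): for all x, y ∈ (0,1), d(f₀(x), f₀(y)) ≤ d(x, y). -/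
lemma hval_lo {x : ℝ} (hx0 : 0 < x) (hx : x ≤ 1/2) :
    h x = Real.log 2 + Real.log x := by
  rw [h, if_pos hx, Real.log_mul (by norm_num) (ne_of_gt hx0)]

lemma hval_hi {x : ℝ} (hx : 1/2 ≤ x) (hx1 : x < 1) :
    h x = -(Real.log 2 + Real.log (1-x)) := by
  rcases eq_or_lt_of_le hx with rfl | hx'
  · rw [h]
    have hlog : Real.log ((1:ℝ)/2) = -Real.log 2 := by
      rw [show (1:ℝ)/2 = 2⁻¹ by norm_num, Real.log_inv]
    norm_num
    linarith
  · rw [h, if_neg (not_le.mpr hx'),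
      Real.log_mul (by norm_num) (by intro hh; linarith [sub_eq_zero.mp hh] : (1:ℝ)-x ≠ 0)]

lemma Gval_lo {c x : ℝ} (hc0 : 0 < c) (hc1 : c < 1/2) (hx0 : 0 < x) (hx : x ≤ 1 - c) :
    h (f₀ c x) = Real.log x - Real.log (1-c) := by
  have h1c : 0 < 1 - c := by linarith
  have hf : f₀ c x = x / (2*(1-c)) := by rw [f₀, if_pos hx]
  have hle : f₀ c x ≤ 1/2 := by
    rw [hf, div_le_iff₀ (by linarith)]; linarith
  have hpos : 0 < f₀ c x := by rw [hf]; positivity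
  rw [hval_lo hpos hle, hf]
  rw [show 2*(1-c) = 2*(1-c) from rfl]
  rw [div_eq_mul_inv, Real.log_mul (ne_of_gt hx0) (by positivity),
    Real.log_inv, Real.log_mul (by norm_num) (ne_of_gt h1c)]
  ring

lemma Gval_hi {c x : ℝ} (hc0 : 0 < c) (hc1 : c < 1/2) (hx : 1 - c ≤ x) (hx1 : x < 1) :
    h (f₀ c x) = Real.log c - Real.log (1-x) := by
  have h1x : 0 < 1 - x := by linarith
  rcases eq_or_lt_of_le hx with rfl | hx'
  · have hf : f₀ c (1-c) = (1-c) / (2*(1-c)) := by rw [f₀, if_pos le_rfl]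
    have h1c : (0:ℝ) < 1 - c := by linarith
    have : f₀ c (1-c) = 1/2 := by rw [hf]; field_simp
    rw [this]
    have : h (1/2 : ℝ) = 0 := by rw [h, if_pos le_rfl]; norm_num
    rw [this]
    simp [sub_sub_cancel]
  · have hf : f₀ c x = 1 - (1-x)/(2*c) := by rw [f₀, if_neg (not_le.mpr hx')]
    have hgt : 1/2 < f₀ c x := by
      rw [hf]
      have : (1-x)/(2*c) < 1/2 := by rw [div_lt_iff₀ (by linarith)]; linarith
      linarith
    have hlt : f₀ c x < 1 := by
      rw [hf]
      have : 0 < (1-x)/(2*c) := by positivity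
      linarith
    rw [hval_hi (le_of_lt hgt) hlt, hf]
    have : 1 - (1 - (1-x)/(2*c)) = (1-x)/(2*c) := by ring
    rw [this, div_eq_mul_inv, Real.log_mul (ne_of_gt h1x) (by positivity),
      Real.log_inv, Real.log_mul (by norm_num) (ne_of_gt hc0)]
    ring

-- contraction on [0, 1-c], ordered
lemma keyA {c x y : ℝ} (hc0 : 0 < c) (hc1 : c < 1/2) (hx0 : 0 < x) (hxy : x ≤ y)
    (hy : y ≤ 1 - c) :
    0 ≤ h (f₀ c y) - h (f₀ c x) ∧ h (f₀ c y) - h (f₀ c x) ≤ h y - h x := by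
  have hy0 : 0 < y := lt_of_lt_of_le hx0 hxy
  have hy1 : y < 1 := by linarith
  have hx1 : x < 1 := lt_of_le_of_lt hxy hy1
  rw [Gval_lo hc0 hc1 hx0 (le_trans hxy hy), Gval_lo hc0 hc1 hy0 hy]
  constructor
  · have := Real.log_le_log hx0 hxy
    linarith
  · rcases le_or_gt y (1/2) with hy2 | hy2
    · rw [hval_lo hx0 (le_trans hxy hy2), hval_lo hy0 hy2]; linarith
    · rcases le_or_gt x (1/2) with hx2 | hx2
      · -- x ≤ 1/2 < y : need log y - log x ≤ -(log2+log(1-y)) - (log2 + log x)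
        rw [hval_lo hx0 hx2, hval_hi (le_of_lt hy2) hy1]
        have key : Real.log ((2*y)*(2*(1-y))) ≤ Real.log 1 := by
          apply Real.log_le_log (by nlinarith)
          nlinarith [sq_nonneg (2*y - 1)]
        rw [Real.log_one, Real.log_mul (by positivity) (ne_of_gt (by nlinarith : (0:ℝ) < 2*(1-y))),
          Real.log_mul (by norm_num) (ne_of_gt hy0),
          Real.log_mul (by norm_num) (by linarith : (1:ℝ)-y ≠ 0)] at key
        linarith
      · -- 1/2 < x ≤ y
        rw [hval_hi (le_of_lt hx2) hx1, hval_hi (le_of_lt hy2) hy1]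
        have key : Real.log (y*(1-y)) ≤ Real.log (x*(1-x)) := by
          apply Real.log_le_log (by nlinarith)
          nlinarith
        rw [Real.log_mul (ne_of_gt hy0) (by linarith : (1:ℝ)-y ≠ 0),
          Real.log_mul (ne_of_gt hx0) (by linarith : (1:ℝ)-x ≠ 0)] at key
        linarith

-- isometry on [1-c, 1), ordered
lemma keyC {c x y : ℝ} (hc0 : 0 < c) (hc1 : c < 1/2) (hx : 1 - c ≤ x) (hxy : x ≤ y)
    (hy1 : y < 1) :
    0 ≤ h (f₀ c y) - h (f₀ c x) ∧ h (f₀ c y) - h (f₀ c x) = h y - h x := by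
  have hx1 : x < 1 := lt_of_le_of_lt hxy hy1
  have hx2 : 1/2 ≤ x := by linarith
  rw [Gval_hi hc0 hc1 hx hx1, Gval_hi hc0 hc1 (le_trans hx hxy) hy1,
    hval_hi hx2 hx1, hval_hi (le_trans hx2 hxy) hy1]
  constructor
  · have := Real.log_le_log (by linarith : (0:ℝ) < 1 - y) (by linarith : 1 - y ≤ 1 - x)
    linarith
  · ring

lemma keyMain {c x y : ℝ} (hc0 : 0 < c) (hc1 : c < 1/2) (hx0 : 0 < x) (hxy : x ≤ y)
    (hy1 : y < 1) :
    0 ≤ h (f₀ c y) - h (f₀ c x) ∧ h (f₀ c y) - h (f₀ c x) ≤ h y - h x := by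
  rcases le_or_gt y (1-c) with hcase | hcase
  · exact keyA hc0 hc1 hx0 hxy hcase
  · rcases le_or_gt x (1-c) with hcase2 | hcase2
    · have hA := keyA hc0 hc1 hx0 hcase2 le_rfl
      have hC := keyC hc0 hc1 le_rfl (le_of_lt hcase) hy1
      exact ⟨by linarith [hA.1, hC.1], by linarith [hA.2, hC.2]⟩
    · have hC := keyC hc0 hc1 (le_of_lt hcase2) hxy hy1
      exact ⟨hC.1, le_of_eq hC.2⟩

theorem stmt_10 (c : ℝ) (hc0 : 0 < c) (hc1 : c < 1/2)
    (x y : ℝ) (hx : x ∈ Set.Ioo (0:ℝ) 1) (hy : y ∈ Set.Ioo (0:ℝ) 1) :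
    d (f₀ c x) (f₀ c y) ≤ d x y := by
  obtain ⟨hx0, hx1⟩ := hx
  obtain ⟨hy0, hy1⟩ := hy
  rcases le_total x y with hxy | hxy
  · obtain ⟨h1, h2⟩ := keyMain hc0 hc1 hx0 hxy hy1
    rw [d, d, abs_sub_comm (h (f₀ c x)), abs_sub_comm (h x)]
    rw [abs_of_nonneg h1, abs_of_nonneg (by linarith)]
    exact h2
  · obtain ⟨h1, h2⟩ := keyMain hc0 hc1 hy0 hxy hx1
    rw [d, d, abs_of_nonneg h1, abs_of_nonneg (by linarith)]
    exact h2
end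

section
/- Let 0 < c < 1/2, a = 1/(2(1−c)), b = 1/(2c), and f₁ the piecewise linear map with f₁(x) = b·x on [0, c] and f₁(x) = 1 − a(1−x) on [c, 1]. With the metric d as above: for all x, y ∈ (0,1), d(f₁(x), f₁(y)) ≤ d(x, y). -/
lemma h_mono {x y : ℝ} (hx : 0 < x) (hxy : x ≤ y) (hy : y < 1) : h x ≤ h y := by
  unfold h
  rcases le_or_gt y (1/2) with hy2 | hy2
  · rw [if_pos (hxy.trans hy2), if_pos hy2]
    exact Real.log_le_log (by linarith) (by linarith)
  · rw [if_neg (not_le.2 hy2)]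
    rcases le_or_gt x (1/2) with hx2 | hx2
    · rw [if_pos hx2]
      have h1 : Real.log (2*x) ≤ 0 := Real.log_nonpos (by linarith) (by linarith)
      have h2 : Real.log (2*(1-y)) ≤ 0 := Real.log_nonpos (by linarith) (by linarith)
      linarith
    · rw [if_neg (not_le.2 hx2)]
      have := Real.log_le_log (show (0:ℝ) < 2*(1-y) by linarith)
        (show 2*(1-y) ≤ 2*(1-x) by linarith)
      linarith

lemma f1_pos {c x : ℝ} (hc0 : 0 < c) (hc1 : c < 1/2) (hx : 0 < x) : 0 < f₁ c x := by
  unfold f₁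
  split_ifs with hxc
  · positivity
  · push_neg at hxc
    have : (1-x) / (2*(1-c)) < 1/2 := by
      rw [div_lt_iff₀ (by linarith)]; nlinarith
    linarith

lemma f1_lt_one {c x : ℝ} (hc0 : 0 < c) (hc1 : c < 1/2) (hx0 : 0 < x) (hx : x < 1) :
    f₁ c x < 1 := by
  unfold f₁
  split_ifs with hxc
  · have : x / (2*c) ≤ 1/2 := by
      rw [div_le_iff₀ (by linarith)]; nlinarith
    linarith
  · have : 0 < (1-x) / (2*(1-c)) := by
      apply div_pos <;> [skip; skip] <;> push_neg at hxc <;> linarith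
    linarith

lemma f1_mono {c x y : ℝ} (hc0 : 0 < c) (hc1 : c < 1/2) (hxy : x ≤ y) :
    f₁ c x ≤ f₁ c y := by
  unfold f₁
  split_ifs with hxc hyc hyc
  · exact div_le_div_of_nonneg_right hxy (by linarith) |>.trans_eq rfl
  · push_neg at hyc
    have h1 : x / (2*c) ≤ 1/2 := by rw [div_le_iff₀ (by linarith)]; nlinarith
    have h2 : (1-y) / (2*(1-c)) ≤ 1/2 := by rw [div_le_iff₀ (by linarith)]; nlinarith
    linarith
  · linarith
  · have : (1-y) / (2*(1-c)) ≤ (1-x) / (2*(1-c)) :=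
      div_le_div_of_nonneg_right (by linarith) (by linarith) |>.trans_eq rfl
    linarith

/-- Explicit formula for h x - h (f₁ c x) using a clamp of x to [c, 1/2]. -/
lemma key_formula {c x : ℝ} (hc0 : 0 < c) (hc1 : c < 1/2) (hx0 : 0 < x) (hx1 : x < 1) :
    h x - h (f₁ c x) =
      Real.log (2 * (max c (min x (1/2))) * (1 - max c (min x (1/2))) / (1-c)) := by
  have hc1' : (0:ℝ) < 1 - c := by linarith
  rcases le_or_gt x c with hxc | hxc
  · -- q = c, f₁ x = x/(2c)
    have hq : max c (min x (1/2)) = c := by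
      rw [min_eq_left (by linarith), max_eq_left hxc]
    rw [hq]
    have e1 : h x = Real.log (2*x) := if_pos (by linarith : x ≤ 1/2)
    have e2 : h (f₁ c x) = Real.log (x/c) := by
      rw [show f₁ c x = x/(2*c) from if_pos hxc]
      unfold h
      rw [if_pos (show x/(2*c) ≤ 1/2 by rw [div_le_iff₀ (by linarith)]; nlinarith)]
      congr 1; field_simp
    have e3 : 2*c*(1-c)/(1-c) = 2*c := by field_simp
    rw [e1, e2, e3]
    have : Real.log (2*x) = Real.log (x/c) + Real.log (2*c) := by
      rw [← Real.log_mul (by positivity) (by positivity)]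
      congr 1; field_simp
    linarith
  · -- x > c : f₁ x = 1 - (1-x)/(2(1-c)) > 1/2
    have e2 : h (f₁ c x) = -Real.log ((1-x)/(1-c)) := by
      rw [show f₁ c x = 1 - (1-x)/(2*(1-c)) from if_neg (not_le.2 hxc)]
      unfold h
      rw [if_neg]
      · congr 2; field_simp; ring
      · push_neg
        have : (1-x)/(2*(1-c)) < 1/2 := by rw [div_lt_iff₀ (by linarith)]; nlinarith
        linarith
    rcases le_or_gt x (1/2) with hx2 | hx2
    · -- q = x
      have hq : max c (min x (1/2)) = x := by
        rw [min_eq_left hx2, max_eq_right hxc.le]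
      rw [hq]
      have e1 : h x = Real.log (2*x) := if_pos hx2
      rw [e1, e2]
      have : Real.log (2*x*(1-x)/(1-c)) = Real.log (2*x) + Real.log ((1-x)/(1-c)) := by
        rw [← Real.log_mul (by positivity)
          (ne_of_gt (div_pos (by linarith) (by linarith)))]
        congr 1; field_simp; try ring
      linarith
    · -- q = 1/2
      have hq : max c (min x (1/2)) = 1/2 := by
        rw [min_eq_right hx2.le, max_eq_right hc1.le]
      rw [hq]
      have e1 : h x = -Real.log (2*(1-x)) := if_neg (not_le.2 hx2)
      rw [e1, e2]
      have e3 : 2*(1/2:ℝ)*(1-1/2)/(1-c) = 1/(2*(1-c)) := by field_simp; ring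
      rw [e3]
      have : Real.log ((1-x)/(1-c)) = Real.log (2*(1-x)) + Real.log (1/(2*(1-c))) := by
        rw [← Real.log_mul (ne_of_gt (by linarith : (0:ℝ) < 2*(1-x)))
          (ne_of_gt (div_pos one_pos (by linarith)))]
        congr 1; field_simp
      linarith

lemma phi_mono {c x y : ℝ} (hc0 : 0 < c) (hc1 : c < 1/2)
    (hx0 : 0 < x) (hx1 : x < 1) (hy0 : 0 < y) (hy1 : y < 1) (hxy : x ≤ y) :
    h x - h (f₁ c x) ≤ h y - h (f₁ c y) := by
  rw [key_formula hc0 hc1 hx0 hx1, key_formula hc0 hc1 hy0 hy1]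
  set qx := max c (min x (1/2)) with hqx
  set qy := max c (min y (1/2)) with hqy
  have h1 : qx ≤ qy := max_le_max le_rfl (min_le_min hxy le_rfl)
  have h2 : c ≤ qx := le_max_left _ _
  have h3 : qy ≤ 1/2 := max_le hc1.le (min_le_right _ _)
  apply Real.log_le_log
  · apply div_pos
    · have : 0 < qx := lt_of_lt_of_le hc0 h2
      nlinarith
    · linarith
  · apply div_le_div_of_nonneg_right _ (by linarith)
    nlinarith

lemma main_aux (c : ℝ) (hc0 : 0 < c) (hc1 : c < 1/2)
    {x y : ℝ} (hx : x ∈ Set.Ioo (0:ℝ) 1) (hy : y ∈ Set.Ioo (0:ℝ) 1) (hxy : x ≤ y) :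
    d (f₁ c x) (f₁ c y) ≤ d x y := by
  obtain ⟨hx0, hx1⟩ := hx
  obtain ⟨hy0, hy1⟩ := hy
  have hm : h (f₁ c x) ≤ h (f₁ c y) :=
    h_mono (f1_pos hc0 hc1 hx0) (f1_mono hc0 hc1 hxy) (f1_lt_one hc0 hc1 hy0 hy1)
  have hφ := phi_mono hc0 hc1 hx0 hx1 hy0 hy1 hxy
  unfold d
  rw [abs_sub_comm (h (f₁ c x)), abs_of_nonneg (by linarith)]
  have : h y - h x ≤ |h x - h y| := by rw [abs_sub_comm]; exact le_abs_self _
  linarith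

theorem stmt_11 (c : ℝ) (hc0 : 0 < c) (hc1 : c < 1/2)
    (x y : ℝ) (hx : x ∈ Set.Ioo (0:ℝ) 1) (hy : y ∈ Set.Ioo (0:ℝ) 1) :
    d (f₁ c x) (f₁ c y) ≤ d x y := by
  rcases le_total x y with hxy | hxy
  · exact main_aux c hc0 hc1 hx hy hxy
  · have := main_aux c hc0 hc1 hy hx hxy
    rw [show d (f₁ c x) (f₁ c y) = d (f₁ c y) (f₁ c x) from abs_sub_comm _ _,
        show d x y = d y x from abs_sub_comm _ _]
    exact this
end
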